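/- arXiv:1409.5952 — 7 statements merged into one kernel-verified Lean document; each statement's English description precedes it below -/
import Mathlib

section
/- Let R be a prime ring of characteristic different from 2, let L be a noncentral Lie ideal of R, and let I be the two-sided ideal of R generated by [L,L] (the additive subgroup generated by all commutators [u,v] = uv - vu with u, v ∈ L). Then I ⊆ L + L² (where L² denotes the additive subgroup generated by all products uv with u, v ∈ L) and [I,I] ⊆ L (i.e., [a,b] ∈ L for all a, b ∈ I). -/
/-- Let `R` be a prime ring of characteristic different from 2
(i.e. 2-torsion free), `L` a noncentral Lie ideal of `R`, and `I` the two-sided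
ideal of `R` generated by `[L,L]`.  Then `I ⊆ L + L²` and `[I,I] ⊆ L`. -/
theorem stmt_0 {R : Type*} [NonUnitalRing R]
    (hprime : ∀ a b : R, (∀ r : R, a * r * b = 0) → a = 0 ∨ b = 0)
    (hchar : ∀ x : R, x + x = 0 → x = 0)
    (L : AddSubgroup R)
    (hLie : ∀ r l : R, l ∈ L → r * l - l * r ∈ L)
    (hnc : ∃ l ∈ L, ∃ r : R, l * r ≠ r * l)
    (I : TwoSidedIdeal R)
    (hI : I = TwoSidedIdeal.span {x : R | ∃ u ∈ L, ∃ v ∈ L, x = u * v - v * u})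
    (L2 : AddSubgroup R)
    (hL2 : L2 = AddSubgroup.closure {x : R | ∃ u ∈ L, ∃ v ∈ L, x = u * v}) :
    (∀ x ∈ I, ∃ l ∈ L, ∃ m ∈ L2, x = l + m) ∧
    (∀ a ∈ I, ∀ b ∈ I, a * b - b * a ∈ L) := by
  classical
  -- commutator with an element of `L` on the left
  have hcL' : ∀ (r : R) {l : R}, l ∈ L → l * r - r * l ∈ L := by
    intro r l hl
    have := L.neg_mem (hLie r l hl)
    simpa using this
  -- products of two elements of L are in L2
  have hL2sub : ∀ p ∈ L, ∀ q ∈ L, p * q ∈ L2 := by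
    intro p hp q hq
    rw [hL2]
    exact AddSubgroup.subset_closure ⟨p, hp, q, hq, rfl⟩
  -- induction principle for L2
  have hL2ind : ∀ {P : R → Prop},
      (∀ p ∈ L, ∀ q ∈ L, P (p * q)) → P 0 →
      (∀ a b : R, P a → P b → P (a + b)) → (∀ a : R, P a → P (-a)) →
      ∀ m ∈ L2, P m := by
    intro P hgen h0 hadd hneg m hm
    rw [hL2] at hm
    refine AddSubgroup.closure_induction (p := fun x _ => P x) ?_ h0
      (fun a b _ _ ha hb => hadd a b ha hb) (fun a _ ha => hneg a ha) hm
    rintro x ⟨p, hp, q, hq, rfl⟩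
    exact hgen p hp q hq
  -- L2 is stable under commutation with R
  have hL2lie : ∀ m ∈ L2, ∀ r : R, r * m - m * r ∈ L2 := by
    refine hL2ind ?_ ?_ ?_ ?_
    · intro p hp q hq r
      have h1 : p * (r * q - q * r) ∈ L2 := hL2sub p hp _ (hLie r q hq)
      have h2 : (r * p - p * r) * q ∈ L2 := hL2sub _ (hLie r p hp) q hq
      have heq : r * (p * q) - (p * q) * r
          = p * (r * q - q * r) + (r * p - p * r) * q := by noncomm_ring
      rw [heq]
      exact L2.add_mem h1 h2
    · intro r; simpa using L2.zero_mem
    · intro a b ha hb r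
      have heq : r * (a + b) - (a + b) * r = (r * a - a * r) + (r * b - b * r) := by
        noncomm_ring
      rw [heq]
      exact L2.add_mem (ha r) (hb r)
    · intro a ha r
      have heq : r * (-a) - (-a) * r = -(r * a - a * r) := by noncomm_ring
      rw [heq]
      exact L2.neg_mem (ha r)
  -- the key identity: [pq, st] ∈ L for p,q,s,t ∈ L
  have key3 : ∀ p ∈ L, ∀ q ∈ L, ∀ s ∈ L, ∀ t ∈ L,
      (p * q) * (s * t) - (s * t) * (p * q) ∈ L := by
    intro p hp q hq s hs t ht
    have h1 : (p * q) * t - t * (p * q) ∈ L := hLie _ t ht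
    have h2 : s * ((p * q) * t - t * (p * q)) - ((p * q) * t - t * (p * q)) * s ∈ L :=
      hLie s _ h1
    have h3 : (p * q * s) * t - t * (p * q * s) ∈ L := hLie _ t ht
    have h4 : (p * q * t) * s - s * (p * q * t) ∈ L := hLie _ s hs
    have heq : (p * q) * (s * t) - (s * t) * (p * q)
        = (s * ((p * q) * t - t * (p * q)) - ((p * q) * t - t * (p * q)) * s)
          + ((p * q * s) * t - t * (p * q * s)) + ((p * q * t) * s - s * (p * q * t)) := by
      noncomm_ring
    rw [heq]
    exact L.add_mem (L.add_mem h2 h3) h4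
  -- commutators of two elements of L2 are in L
  have hBB : ∀ m ∈ L2, ∀ m' ∈ L2, m * m' - m' * m ∈ L := by
    refine hL2ind ?_ ?_ ?_ ?_
    · intro p hp q hq
      refine hL2ind ?_ ?_ ?_ ?_
      · intro s hs t ht
        exact key3 p hp q hq s hs t ht
      · simpa using L.zero_mem
      · intro a b ha hb
        have heq : (p * q) * (a + b) - (a + b) * (p * q)
            = ((p * q) * a - a * (p * q)) + ((p * q) * b - b * (p * q)) := by noncomm_ring
        rw [heq]
        exact L.add_mem ha hb
      · intro a ha
        have heq : (p * q) * (-a) - (-a) * (p * q) = -((p * q) * a - a * (p * q)) := by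
          noncomm_ring
        rw [heq]
        exact L.neg_mem ha
    · intro m' _; simpa using L.zero_mem
    · intro a b ha hb m' hm'
      have heq : (a + b) * m' - m' * (a + b) = (a * m' - m' * a) + (b * m' - m' * b) := by
        noncomm_ring
      rw [heq]
      exact L.add_mem (ha m' hm') (hb m' hm')
    · intro a ha m' hm'
      have heq : (-a) * m' - m' * (-a) = -(a * m' - m' * a) := by noncomm_ring
      rw [heq]
      exact L.neg_mem (ha m' hm')
  -- the decomposition predicate
  set PT : R → Prop := fun x => ∃ l ∈ L, ∃ m ∈ L2, x = l + m with hPT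
  have PT0 : PT 0 := ⟨0, L.zero_mem, 0, L2.zero_mem, by simp⟩
  have PTadd : ∀ {x y : R}, PT x → PT y → PT (x + y) := by
    rintro x y ⟨l, hl, m, hm, rfl⟩ ⟨l', hl', m', hm', rfl⟩
    exact ⟨l + l', L.add_mem hl hl', m + m', L2.add_mem hm hm', by abel⟩
  have PTneg : ∀ {x : R}, PT x → PT (-x) := by
    rintro x ⟨l, hl, m, hm, rfl⟩
    exact ⟨-l, L.neg_mem hl, -m, L2.neg_mem hm, by abel⟩
  have PTL : ∀ {l : R}, l ∈ L → PT l := by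
    intro l hl
    exact ⟨l, hl, 0, L2.zero_mem, by simp⟩
  have PTcast : ∀ {x y : R}, PT x → y = x → PT y := by
    rintro x y hx rfl; exact hx
  -- PT is stable under commutation
  have PTlie : ∀ {x : R}, PT x → ∀ r : R, PT (r * x - x * r) := by
    rintro x ⟨l, hl, m, hm, rfl⟩ r
    refine ⟨r * l - l * r, hLie r l hl, r * m - m * r, hL2lie m hm r, by noncomm_ring⟩
  -- membership of the generators and their translates
  have PTg : ∀ u ∈ L, ∀ v ∈ L, PT (u * v - v * u) := by
    intro u hu v hv
    exact PTL (hLie u v hv)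
  have PTrg : ∀ u ∈ L, ∀ v ∈ L, ∀ r : R, PT (r * (u * v - v * u)) := by
    intro u hu v hv r
    refine ⟨u * (r * v) - (r * v) * u, hcL' (r * v) hu,
      (r * u - u * r) * v, hL2sub _ (hLie r u hu) v hv, by noncomm_ring⟩
  have PTgs : ∀ u ∈ L, ∀ v ∈ L, ∀ s : R, PT ((u * v - v * u) * s) := by
    intro u hu v hv s
    refine ⟨u * (v * s) - (v * s) * u, hcL' (v * s) hu,
      v * (s * u - u * s), hL2sub v hv _ (hLie s u hu), by noncomm_ring⟩
  have PTrgs : ∀ u ∈ L, ∀ v ∈ L, ∀ r s : R, PT (r * ((u * v - v * u) * s)) := by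
    intro u hu v hv r s
    have h1 := PTlie (PTgs u hu v hv s) r
    have h2 := PTgs u hu v hv (s * r)
    refine PTcast (PTadd h1 h2) ?_
    noncomm_ring
  -- build the two-sided ideal of elements all of whose translates satisfy PT
  let C : Set R := {x | PT x ∧ (∀ r : R, PT (r * x)) ∧ (∀ s : R, PT (x * s)) ∧
    (∀ r s : R, PT (r * (x * s)))}
  have hC0 : (0 : R) ∈ C := by
    refine ⟨PT0, fun r => ?_, fun s => ?_, fun r s => ?_⟩ <;> simpa using PT0
  have hCadd : ∀ {x y : R}, x ∈ C → y ∈ C → x + y ∈ C := by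
    rintro x y ⟨h1, h2, h3, h4⟩ ⟨h1', h2', h3', h4'⟩
    refine ⟨PTadd h1 h1', fun r => ?_, fun s => ?_, fun r s => ?_⟩
    · exact PTcast (PTadd (h2 r) (h2' r)) (by noncomm_ring)
    · exact PTcast (PTadd (h3 s) (h3' s)) (by noncomm_ring)
    · exact PTcast (PTadd (h4 r s) (h4' r s)) (by noncomm_ring)
  have hCneg : ∀ {x : R}, x ∈ C → -x ∈ C := by
    rintro x ⟨h1, h2, h3, h4⟩
    refine ⟨PTneg h1, fun r => ?_, fun s => ?_, fun r s => ?_⟩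
    · exact PTcast (PTneg (h2 r)) (by noncomm_ring)
    · exact PTcast (PTneg (h3 s)) (by noncomm_ring)
    · exact PTcast (PTneg (h4 r s)) (by noncomm_ring)
  have hCl : ∀ {x y : R}, y ∈ C → x * y ∈ C := by
    rintro x y ⟨h1, h2, h3, h4⟩
    refine ⟨h2 x, fun r => ?_, fun s => ?_, fun r s => ?_⟩
    · exact PTcast (h2 (r * x)) (by rw [mul_assoc])
    · exact PTcast (h4 x s) (by rw [mul_assoc])
    · exact PTcast (h4 (r * x) s) (by rw [mul_assoc, mul_assoc])
  have hCr : ∀ {x y : R}, x ∈ C → x * y ∈ C := by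
    rintro y x ⟨h1, h2, h3, h4⟩
    refine ⟨h3 x, fun r => ?_, fun s => ?_, fun r s => ?_⟩
    · exact h4 r x
    · exact PTcast (h3 (x * s)) (by rw [mul_assoc])
    · exact PTcast (h4 r (x * s)) (by rw [mul_assoc])
  let J : TwoSidedIdeal R := TwoSidedIdeal.mk' C hC0 hCadd hCneg hCl hCr
  have hIsub : ∀ x ∈ I, PT x := by
    intro x hx
    rw [hI, TwoSidedIdeal.mem_span_iff] at hx
    have hxJ : x ∈ J := by
      refine hx J ?_
      rintro g ⟨u, hu, v, hv, rfl⟩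
      show u * v - v * u ∈ J
      rw [show J = TwoSidedIdeal.mk' C hC0 hCadd hCneg hCl hCr from rfl,
        TwoSidedIdeal.mem_mk']
      exact ⟨PTg u hu v hv, PTrg u hu v hv, PTgs u hu v hv, PTrgs u hu v hv⟩
    rw [show J = TwoSidedIdeal.mk' C hC0 hCadd hCneg hCl hCr from rfl,
      TwoSidedIdeal.mem_mk'] at hxJ
    exact hxJ.1
  constructor
  · exact fun x hx => hIsub x hx
  · intro a ha b hb
    obtain ⟨l, hl, m, hm, rfl⟩ := hIsub a ha
    obtain ⟨l', hl', m', hm', rfl⟩ := hIsub b hb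
    have c1 : l * (l' + m') - (l' + m') * l ∈ L := hcL' (l' + m') hl
    have c2 : m * l' - l' * m ∈ L := hLie m l' hl'
    have c3 : m * m' - m' * m ∈ L := hBB m hm m' hm'
    have heq : (l + m) * (l' + m') - (l' + m') * (l + m)
        = (l * (l' + m') - (l' + m') * l) + (m * l' - l' * m) + (m * m' - m' * m) := by
      noncomm_ring
    rw [heq]
    exact L.add_mem (L.add_mem c1 c2) c3
end

section
/- Let R = M_k(F) be the ring of all k×k matrices over a field F with k ≥ 3, and let b, c ∈ R. Suppose that b[x₁,x₂] + [x₁,x₂]c ∈ Z(R) for all x₁, x₂ ∈ R. Then b and c are scalar matrices, i.e., b, c ∈ F·I_k. -/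
/-! With `E i j = single i j 1`, the identity `[E i j, E j j] = E i j` for `i ≠ j` makes
`b * E i j + E i j * c` central, hence scalar; its diagonal entry at an index `p ∉ {i, j}` is
zero, so `b * E i j + E i j * c = 0`. Reading off entries, `b` and `c` are diagonal and
`b i i + c j j = 0` whenever `i ≠ j`; a third index then forces both diagonals to be constant. -/

namespace Matrix

variable {n R : Type*} [DecidableEq n] [Ring R]

theorem exists_eq_smul_one_of_isDiag {A : Matrix n n R} (hA : A.IsDiag)
    (hd : ∀ i j, A i i = A j j) : ∃ a : R, A = a • 1 := by
  cases isEmpty_or_nonempty n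
  · exact ⟨0, Subsingleton.elim _ _⟩
  obtain ⟨o⟩ := ‹Nonempty n›
  refine ⟨A o o, ?_⟩
  ext i j
  rcases eq_or_ne i j with rfl | hij
  · simp [hd i o]
  · simp [hA hij, hij]

variable [Fintype n]

theorem single_mul_single_sub_single_mul_single_of_ne {i j : n} (hij : i ≠ j) :
    single i j (1 : R) * single j j 1 - single j j 1 * single i j 1 = single i j 1 := by
  rw [single_mul_single_same, single_mul_single_of_ne _ _ _ _ hij.symm, one_mul, sub_zero]

theorem eq_zero_of_forall_mul_comm_of_apply_eq_zero {M : Matrix n n R}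
    (hM : ∀ y, M * y = y * M) {p : n} (hp : M p p = 0) : M = 0 := by
  obtain ⟨r, rfl⟩ := mem_range_scalar_of_commute_single (M := M) fun _ _ _ => (hM _).symm
  obtain rfl : r = 0 := by simpa using hp
  simp

theorem mul_single_add_single_mul_apply (b c : Matrix n n R) (i j p q : n) :
    (b * single i j (1 : R) + single i j 1 * c : Matrix n n R) p q =
      (if q = j then b p i else 0) + (if p = i then c j q else 0) := by
  by_cases hq : q = j <;> by_cases hp : p = i <;> simp_all

theorem mul_single_add_single_mul_eq_zero {b c : Matrix n n R}
    (h : ∀ x₁ x₂ y : Matrix n n R,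
      (b * (x₁ * x₂ - x₂ * x₁) + (x₁ * x₂ - x₂ * x₁) * c) * y =
        y * (b * (x₁ * x₂ - x₂ * x₁) + (x₁ * x₂ - x₂ * x₁) * c))
    {i j p : n} (hij : i ≠ j) (hpi : p ≠ i) (hpj : p ≠ j) :
    b * single i j 1 + single i j 1 * c = 0 := by
  refine eq_zero_of_forall_mul_comm_of_apply_eq_zero (p := p) (fun y => ?_) ?_
  · simpa only [single_mul_single_sub_single_mul_single_of_ne hij] using
      h (single i j 1) (single j j 1) y
  · simp [hpi, hpj]

theorem exists_eq_smul_one_of_mul_single_add_single_mul_eq_zero (hn : 3 ≤ ENat.card n)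
    {b c : Matrix n n R} (h : ∀ i j, i ≠ j → b * single i j 1 + single i j 1 * c = 0) :
    (∃ β : R, b = β • 1) ∧ ∃ γ : R, c = γ • 1 := by
  have third := ENat.exists_ne_ne_of_three_le hn
  have entry (i j p q : n) (hij : i ≠ j) :
      (if q = j then b p i else 0) + (if p = i then c j q else 0) = 0 := by
    rw [← mul_single_add_single_mul_apply, h i j hij, zero_apply]
  have hdiag (i j : n) (hij : i ≠ j) : b i i + c j j = 0 := by simpa using entry i j i j hij
  constructor
  · refine exists_eq_smul_one_of_isDiag (fun p i hpi => ?_) (fun i i' => ?_)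
    · obtain ⟨j, -, hji⟩ := third p i
      simpa [hpi] using entry i j p j hji.symm
    · obtain ⟨j, hji, hji'⟩ := third i i'
      exact add_right_cancel ((hdiag i j hji.symm).trans (hdiag i' j hji'.symm).symm)
  · refine exists_eq_smul_one_of_isDiag (fun j q hjq => ?_) (fun j j' => ?_)
    · obtain ⟨i, hij, -⟩ := third j q
      simpa [hjq.symm] using entry i j i q hij
    · obtain ⟨i, hij, hij'⟩ := third j j'
      exact add_left_cancel ((hdiag i j hij).trans (hdiag i j' hij').symm)

end Matrix

/-- Let `R = M_k(F)`, `k ≥ 3`.  If `b[x₁,x₂] + [x₁,x₂]c ∈ Z(R)`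
for all `x₁, x₂ ∈ R`, then `b` and `c` are scalar matrices. -/
theorem stmt_1 {F : Type*} [Field F] {k : ℕ} (hk : 3 ≤ k)
    (b c : Matrix (Fin k) (Fin k) F)
    (h : ∀ x₁ x₂ : Matrix (Fin k) (Fin k) F,
      ∀ y : Matrix (Fin k) (Fin k) F,
        (b * (x₁ * x₂ - x₂ * x₁) + (x₁ * x₂ - x₂ * x₁) * c) * y =
          y * (b * (x₁ * x₂ - x₂ * x₁) + (x₁ * x₂ - x₂ * x₁) * c)) :
    (∃ β : F, b = β • (1 : Matrix (Fin k) (Fin k) F)) ∧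
    (∃ γ : F, c = γ • (1 : Matrix (Fin k) (Fin k) F)) := by
  refine Matrix.exists_eq_smul_one_of_mul_single_add_single_mul_eq_zero (by simpa using hk)
    fun i j hij => ?_
  obtain ⟨p, hpi, hpj⟩ := Fin.exists_ne_and_ne_of_two_lt i j hk
  exact Matrix.mul_single_add_single_mul_eq_zero h hij hpi hpj
end

section
/- Let F be a field, k ≥ 3, and b, c ∈ M_k(F). Suppose that for all indices i ≠ j (1 ≤ i, j ≤ k), the matrix b·e_{ij} + e_{ij}·c lies in the center Z(M_k(F)). Then b and c are diagonal matrices. -/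
/-!
A central matrix has zero off-diagonal entries. For `i ≠ j` and `p ∉ {i, j}`, the `(p, j)` entry of
`b·e_{ij} + e_{ij}·c` is `b p i`, and for `q ∉ {i, j}` its `(i, q)` entry is `c j q`. Since `k ≥ 3`,
every off-diagonal position of `b` or `c` arises this way.
-/

open Matrix

namespace Matrix

variable {n α : Type*} [Fintype n] [DecidableEq n]

theorem apply_eq_zero_of_forall_mul_comm [Semiring α] {z : Matrix n n α}
    (hz : ∀ x : Matrix n n α, z * x = x * z) {p q : n} (hpq : p ≠ q) : z p q = 0 :=
  row_eq_zero_of_commute_single (i := p) (hz _).symm hpq.symm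

variable [NonUnitalNonAssocSemiring α] (b c : Matrix n n α) {i j : n} (a : α)

theorem mul_single_add_single_mul_apply_of_ne_left {p : n} (hpi : p ≠ i) :
    (b * single i j a + single i j a * c) p j = b p i * a := by
  rw [add_apply, mul_single_apply_same, single_mul_apply_of_ne _ _ _ _ _ hpi, add_zero]

theorem mul_single_add_single_mul_apply_of_ne_right {q : n} (hqj : q ≠ j) :
    (b * single i j a + single i j a * c) i q = a * c j q := by
  rw [add_apply, single_mul_apply_same, mul_single_apply_of_ne _ _ _ _ _ hqj, zero_add]

end Matrix

/-- Let `k ≥ 3` and `b, c ∈ M_k(F)`.  If for all `i ≠ j` the matrix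
`b·e_{ij} + e_{ij}·c` is central, then `b` and `c` are diagonal. -/
theorem stmt_4 {F : Type*} [Field F] {k : ℕ} (hk : 3 ≤ k)
    (b c : Matrix (Fin k) (Fin k) F)
    (h : ∀ i j : Fin k, i ≠ j →
      ∀ x : Matrix (Fin k) (Fin k) F,
        (b * Matrix.single i j (1 : F) + Matrix.single i j (1 : F) * c) * x =
          x * (b * Matrix.single i j (1 : F) + Matrix.single i j (1 : F) * c)) :
    b.IsDiag ∧ c.IsDiag := by
  constructor
  · intro p i hpi
    obtain ⟨j, hji, hjp⟩ := Fin.exists_ne_and_ne_of_two_lt i p hk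
    simpa only [mul_single_add_single_mul_apply_of_ne_left b c 1 hpi, mul_one] using
      apply_eq_zero_of_forall_mul_comm (h i j hji.symm) hjp.symm
  · intro j q hjq
    obtain ⟨i, hij, hiq⟩ := Fin.exists_ne_and_ne_of_two_lt j q hk
    simpa only [mul_single_add_single_mul_apply_of_ne_right b c 1 hjq.symm, one_mul] using
      apply_eq_zero_of_forall_mul_comm (h i j hij) hiq
end

section
/- Let F be a field, k ≥ 3, and let s, t ≥ 0 be fixed integers. Then M_k(F) does not satisfy the polynomial identity [[x₁,x₂]^s ([x₄,x₂] + [x₁,x₅]) [x₁,x₂]^t, x₃] = 0; explicitly, there exist x₁, x₂, x₃, x₄, x₅ ∈ M_k(F) (for instance x₁ = e_{12}, x₂ = e_{21}, x₃ = e_{13}, x₄ = e_{12}, x₅ = 0) such that [[x₁,x₂]^s ([x₄,x₂] + [x₁,x₅]) [x₁,x₂]^t, x₃] ≠ 0. -/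
/-!
Take `x₁ = x₄ = e₁₂`, `x₂ = e₂₁`, `x₃ = e₁₃`, `x₅ = 0`. Then the polynomial evaluates to
`[d ^ (s + 1 + t), e₁₃]` with `d = [e₁₂, e₂₁] = e₁₁ - e₂₂`. Since `d e₁₃ = e₁₃` and
`e₁₃ d = 0`, this commutator is `e₁₃ ≠ 0`.
-/

open Matrix

theorem pow_mul_eq_self_of_mul_eq_self {M : Type*} [Monoid M] {a b : M} (h : a * b = b) (n : ℕ) :
    a ^ n * b = b := by
  induction n with
  | zero => rw [pow_zero, one_mul]
  | succ n ih => rw [pow_succ, mul_assoc, h, ih]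

theorem mul_pow_succ_eq_zero_of_mul_eq_zero {M₀ : Type*} [MonoidWithZero M₀] {a b : M₀}
    (h : b * a = 0) (n : ℕ) : b * a ^ (n + 1) = 0 := by
  rw [pow_succ', ← mul_assoc, h, zero_mul]

namespace Matrix

variable {n R : Type*} [Fintype n] [DecidableEq n] [Ring R]

theorem single_commutator_single_one (i j : n) :
    single i j (1 : R) * single j i 1 - single j i 1 * single i j 1 =
      single i i 1 - single j j 1 := by
  simp only [single_mul_single_same, mul_one]

theorem single_sub_single_mul_single_left {i j : n} (hij : i ≠ j) (l : n) (c : R) :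
    (single i i 1 - single j j 1) * single i l c = single i l c := by
  rw [sub_mul, single_mul_single_same, single_mul_single_of_ne 1 j j i hij.symm, one_mul, sub_zero]

theorem single_mul_single_sub_single_eq_zero {i j l : n} (hli : l ≠ i) (hlj : l ≠ j) (c : R) :
    single i l c * (single i i 1 - single j j 1) = 0 := by
  rw [mul_sub, single_mul_single_of_ne c i l i hli, single_mul_single_of_ne c i l j hlj, sub_zero]

theorem pow_succ_commutator_single {i j l : n} (hij : i ≠ j) (hli : l ≠ i) (hlj : l ≠ j) (m : ℕ) :
    (single i i 1 - single j j 1) ^ (m + 1) * single i l (1 : R) -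
      single i l 1 * (single i i 1 - single j j 1) ^ (m + 1) = single i l 1 := by
  rw [pow_mul_eq_self_of_mul_eq_self (single_sub_single_mul_single_left hij l 1),
    mul_pow_succ_eq_zero_of_mul_eq_zero (single_mul_single_sub_single_eq_zero hli hlj 1), sub_zero]

end Matrix

/-- For `k ≥ 3` and any `s, t ≥ 0`, the ring `M_k(F)` does not satisfy
the identity `[[x₁,x₂]^s ([x₄,x₂] + [x₁,x₅]) [x₁,x₂]^t, x₃] = 0`: there exist
`x₁, x₂, x₃, x₄, x₅` (e.g. `x₁ = e₁₂, x₂ = e₂₁, x₃ = e₁₃, x₄ = e₁₂, x₅ = 0`) for which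
the expression is nonzero. -/
theorem stmt_7 {F : Type*} [Field F] {k : ℕ} (hk : 3 ≤ k) (s t : ℕ) :
    ∃ x₁ x₂ x₃ x₄ x₅ : Matrix (Fin k) (Fin k) F,
      ((x₁ * x₂ - x₂ * x₁) ^ s * ((x₄ * x₂ - x₂ * x₄) + (x₁ * x₅ - x₅ * x₁)) *
          (x₁ * x₂ - x₂ * x₁) ^ t) * x₃ -
        x₃ * ((x₁ * x₂ - x₂ * x₁) ^ s * ((x₄ * x₂ - x₂ * x₄) + (x₁ * x₅ - x₅ * x₁)) *
          (x₁ * x₂ - x₂ * x₁) ^ t) ≠ 0 := by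
  let i₁ : Fin k := ⟨0, by omega⟩
  let i₂ : Fin k := ⟨1, by omega⟩
  let i₃ : Fin k := ⟨2, by omega⟩
  refine ⟨single i₁ i₂ 1, single i₂ i₁ 1, single i₁ i₃ 1, single i₁ i₂ 1, 0, ?_⟩
  have hpow (d : Matrix (Fin k) (Fin k) F) : d ^ s * (d + 0) * d ^ t = d ^ (s + t + 1) := by
    rw [add_zero, ← pow_succ, ← pow_add, add_right_comm]
  simp only [mul_zero, zero_mul, sub_zero, hpow, single_commutator_single_one]
  rw [pow_succ_commutator_single (by simp [i₁, i₂, Fin.ext_iff]) (by simp [i₁, i₃, Fin.ext_iff])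
    (by simp [i₂, i₃, Fin.ext_iff])]
  intro h
  simpa using congrFun₂ h i₁ i₃
end

section
/- Let F be a field of characteristic different from 2, let k ≥ 3, let b, p ∈ M_k(F), and let s, t ≥ 0 be fixed integers. Suppose that [x₁,x₂]^s (b[x₁,x₂] + [p,[x₁,x₂]]) [x₁,x₂]^t ∈ Z(M_k(F)) for all x₁, x₂ ∈ M_k(F). Then b and p are scalar matrices, i.e., b, p ∈ F·I_k; in particular the map x ↦ bx + [p,x] equals x ↦ λx for some λ ∈ F. -/
/-!
For `i ≠ j` and `α, β ≠ 0`, the matrix `c = α E_ij + β E_ji` is the commutator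
`[E_ii, α E_ij - β E_ji]`, so `E = c^s (b c + [p, c]) c^t` is central. Because `k ≥ 3` there is an
index `l ∉ {i, j}`; row and column `l` of `c` vanish, which forces `E_ll = 0` and hence `E = 0`.
As `c² = αβ q` with `q = E_ii + E_jj` idempotent, multiplying `E = 0` by `c^(s+2)` on the left and
`c^(t+2)` on the right gives `q (b c + [p, c]) q = 0`: linear relations between the entries of `b`
and `p` in rows and columns `i, j`. Comparing `β = 1` with `β = -1` (here `char F ≠ 2` enters)
shows that `b = 0` and that `p` is scalar.
-/

open Matrix

def genInnerDeriv {A : Type*} [Ring A] (b p x : A) : A := b * x + (p * x - x * p)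

section Ring

variable {A : Type*} [Ring A]

theorem mul_pow_mul_genInnerDeriv_mul_pow_mul_eq_zero {P c : A} (hPc : P * c = 0)
    (hcP : c * P = 0) (b p : A) (s t : ℕ) :
    P * (c ^ s * genInnerDeriv b p c * c ^ t) * P = 0 := by
  have hsplit : c ^ s * genInnerDeriv b p c * c ^ t =
      c ^ s * (b + p) * c ^ t * c - c * (c ^ s * p * c ^ t) := by
    calc _ = c ^ s * (b + p) * (c * c ^ t) - c ^ s * c * p * c ^ t := by
          rw [genInnerDeriv]; noncomm_ring
      _ = _ := by
          rw [← pow_mul_comm' c t, pow_mul_comm' c s]; noncomm_ring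
  have hPc_mul : ∀ Z, P * (c * Z) = 0 := fun Z => by rw [← mul_assoc, hPc, zero_mul]
  rw [hsplit, mul_sub, sub_mul]
  simp only [mul_assoc, hcP, mul_zero, hPc_mul, zero_mul, sub_self]

theorem mul_mul_eq_zero_of_pow_mul_mul_pow_eq_zero {F : Type*} [Field F] [Algebra F A]
    {c q M : A} {γ : F} (hγ : γ ≠ 0) (hcc : c * c = γ • q) (hq : IsIdempotentElem q)
    {s t : ℕ} (h : c ^ s * M * c ^ t = 0) : q * M * q = 0 := by
  have hpow : ∀ n, c ^ (2 * n + 2) = γ ^ (n + 1) • q := fun n => by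
    rw [show 2 * n + 2 = 2 * (n + 1) by ring, pow_mul, sq, hcc, smul_pow, hq.pow_succ_eq]
  have hsandwich : c ^ (s + 2) * (c ^ s * M * c ^ t) * c ^ (t + 2) =
      (γ ^ (s + 1) * γ ^ (t + 1)) • (q * M * q) := by
    calc _ = c ^ (s + 2 + s) * M * c ^ (t + (t + 2)) := by
          simp only [pow_add, mul_assoc]
      _ = _ := by
          rw [show s + 2 + s = 2 * s + 2 by ring, show t + (t + 2) = 2 * t + 2 by ring, hpow,
            hpow, smul_mul_assoc, mul_smul_comm, smul_mul_assoc, smul_smul, mul_comm]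
  rw [h, mul_zero, zero_mul, eq_comm, smul_eq_zero] at hsandwich
  exact hsandwich.resolve_left (mul_ne_zero (pow_ne_zero _ hγ) (pow_ne_zero _ hγ))

end Ring

theorem Fintype.exists_ne_and_ne_of_two_lt_card {n : Type*} [Fintype n]
    (hn : 2 < Fintype.card n) (i j : n) : ∃ l, l ≠ i ∧ l ≠ j := by
  classical
  obtain ⟨l, -, hl⟩ := Finset.exists_mem_notMem_of_card_lt_card
    ((Finset.card_le_two (a := i) (b := j)).trans_lt hn : _ < Finset.univ.card)
  simp only [Finset.mem_insert, Finset.mem_singleton, not_or] at hl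
  exact ⟨l, hl⟩

namespace Matrix

section CommRing

variable {n R : Type*} [Fintype n] [DecidableEq n] [CommRing R]

theorem eq_zero_of_forall_mul_comm_of_apply_eq_zero_s8 {E : Matrix n n R}
    (hE : ∀ y, E * y = y * E) {l : n} (hl : E l l = 0) : E = 0 := by
  obtain ⟨r, rfl⟩ := mem_range_scalar_iff_commute_single'.mpr fun _ _ => (hE _).symm
  simp_all

def offDiagPair (i j : n) (α β : R) : Matrix n n R := single i j α + single j i β

variable {i j : n} (α β : R)

theorem offDiagPair_eq_commutator (hij : i ≠ j) :
    offDiagPair i j α β = single i i 1 * (single i j α - single j i β) -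
      (single i j α - single j i β) * single i i 1 := by
  simp [offDiagPair, mul_sub, sub_mul, hij, hij.symm]

theorem offDiagPair_mul_self (hij : i ≠ j) :
    offDiagPair i j α β * offDiagPair i j α β = (α * β) • (single i i 1 + single j j 1) := by
  simp [offDiagPair, mul_add, add_mul, hij, hij.symm, smul_single, mul_comm β α, add_comm]

theorem isIdempotentElem_single_one_add_single_one (hij : i ≠ j) :
    IsIdempotentElem (single i i (1 : R) + single j j 1) := by
  simp [IsIdempotentElem, mul_add, add_mul, hij, hij.symm]

theorem single_one_add_single_one_mul_mul_apply (hij : i ≠ j) (M : Matrix n n R) {y : n}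
    (hy : y = i ∨ y = j) :
    ((single i i 1 + single j j 1) * M * (single i i 1 + single j j 1) : Matrix n n R) i y =
      M i y := by
  rcases hy with rfl | rfl <;> simp [mul_add, add_mul, hij, hij.symm]

theorem single_mul_offDiagPair {l : n} (hli : l ≠ i) (hlj : l ≠ j) :
    single l l 1 * offDiagPair i j α β = 0 := by
  simp [offDiagPair, mul_add, hli, hlj]

theorem offDiagPair_mul_single {l : n} (hli : l ≠ i) (hlj : l ≠ j) :
    offDiagPair i j α β * single l l 1 = 0 := by
  simp [offDiagPair, add_mul, hli.symm, hlj.symm]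

theorem genInnerDeriv_offDiagPair_apply_diag (hij : i ≠ j) (b p : Matrix n n R) :
    genInnerDeriv b p (offDiagPair i j α β) i i = β * (b i j + p i j) - α * p j i := by
  simp [genInnerDeriv, offDiagPair, mul_add, add_mul, hij]
  ring

theorem genInnerDeriv_offDiagPair_apply_offDiag (hij : i ≠ j) (b p : Matrix n n R) :
    genInnerDeriv b p (offDiagPair i j α β) i j = α * (b i i + p i i - p j j) := by
  simp [genInnerDeriv, offDiagPair, mul_add, add_mul, hij, hij.symm]
  ring

end CommRing

variable {n F : Type*} [Fintype n] [DecidableEq n] [Field F]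

theorem offDiagPair_corner_relations {b p : Matrix n n F} {s t : ℕ} {i j l : n}
    (hij : i ≠ j) (hli : l ≠ i) (hlj : l ≠ j) {α β : F} (hα : α ≠ 0) (hβ : β ≠ 0)
    (hE : ∀ y, offDiagPair i j α β ^ s * genInnerDeriv b p (offDiagPair i j α β) *
      offDiagPair i j α β ^ t * y = y * (offDiagPair i j α β ^ s *
        genInnerDeriv b p (offDiagPair i j α β) * offDiagPair i j α β ^ t)) :
    β * (b i j + p i j) - α * p j i = 0 ∧ b i i + p i i - p j j = 0 := by
  set c := offDiagPair i j α β
  have hE_zero : c ^ s * genInnerDeriv b p c * c ^ t = 0 := by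
    refine eq_zero_of_forall_mul_comm_of_apply_eq_zero_s8 hE (l := l) ?_
    simpa using congr_fun₂ (mul_pow_mul_genInnerDeriv_mul_pow_mul_eq_zero
      (single_mul_offDiagPair α β hli hlj) (offDiagPair_mul_single α β hli hlj) b p s t) l l
  have hcorner := mul_mul_eq_zero_of_pow_mul_mul_pow_eq_zero (mul_ne_zero hα hβ)
    (offDiagPair_mul_self α β hij) (isIdempotentElem_single_one_add_single_one hij) hE_zero
  have hdiag := congr_fun₂ hcorner i i
  have hoffDiag := congr_fun₂ hcorner i j
  rw [single_one_add_single_one_mul_mul_apply hij _ (.inl rfl),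
    genInnerDeriv_offDiagPair_apply_diag α β hij] at hdiag
  rw [single_one_add_single_one_mul_mul_apply hij _ (.inr rfl),
    genInnerDeriv_offDiagPair_apply_offDiag α β hij] at hoffDiag
  exact ⟨hdiag, (mul_eq_zero.mp hoffDiag).resolve_left hα⟩

theorem eq_zero_and_exists_eq_smul_one_of_corner_relations (h2 : (2 : F) ≠ 0)
    (hn : 2 < Fintype.card n) {b p : Matrix n n F}
    (H : ∀ i j, i ≠ j → ∀ α β : F, α ≠ 0 → β ≠ 0 →
      β * (b i j + p i j) - α * p j i = 0 ∧ b i i + p i i - p j j = 0) :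
    b = 0 ∧ ∃ π : F, p = π • 1 := by
  have H₁ : ∀ i j, i ≠ j → b i j + p i j - p j i = 0 ∧ b i i + p i i - p j j = 0 :=
    fun i j hij => by simpa using H i j hij 1 1 one_ne_zero one_ne_zero
  have hp_off : ∀ i j, i ≠ j → p j i = 0 := fun i j hij => by
    have hneg := (H i j hij 1 (-1) one_ne_zero (neg_ne_zero.mpr one_ne_zero)).1
    have h2p : 2 * p j i = 0 := by linear_combination -(H₁ i j hij).1 - hneg
    exact (mul_eq_zero.mp h2p).resolve_left h2
  have hb_off : ∀ i j, i ≠ j → b i j = 0 := fun i j hij => by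
    linear_combination (H₁ i j hij).1 - hp_off j i hij.symm + hp_off i j hij
  have hb_add : ∀ i j, i ≠ j → b i i + b j j = 0 := fun i j hij => by
    linear_combination (H₁ i j hij).2 + (H₁ j i hij.symm).2
  have hb_diag : ∀ i, b i i = 0 := fun i => by
    obtain ⟨j, hji, -⟩ := Fintype.exists_ne_and_ne_of_two_lt_card hn i i
    obtain ⟨l, hli, hlj⟩ := Fintype.exists_ne_and_ne_of_two_lt_card hn i j
    have h2b : 2 * b i i = 0 := by
      linear_combination hb_add i j hji.symm + hb_add i l hli.symm - hb_add j l hlj.symm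
    exact (mul_eq_zero.mp h2b).resolve_left h2
  have hp_diag : ∀ i j, p i i = p j j := fun i j => by
    rcases eq_or_ne i j with rfl | hij
    · rfl
    · linear_combination (H₁ i j hij).2 - hb_diag i
  obtain ⟨i₀⟩ : Nonempty n := Fintype.card_pos_iff.mp (by omega)
  refine ⟨ext fun i j => ?_, p i₀ i₀, ext fun i j => ?_⟩
  · rcases eq_or_ne i j with rfl | hij
    · simpa using hb_diag i
    · simpa using hb_off i j hij
  · rcases eq_or_ne i j with rfl | hij
    · simpa using hp_diag i i₀
    · simpa [hij] using hp_off j i hij.symm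

end Matrix

/-- Let `char F ≠ 2`, `k ≥ 3`, `b, p ∈ M_k(F)` and `s, t ≥ 0`.
If `[x₁,x₂]^s (b[x₁,x₂] + [p,[x₁,x₂]]) [x₁,x₂]^t ∈ Z(M_k(F))` for all `x₁, x₂`,
then `b, p` are scalar matrices and `x ↦ bx + [p,x]` equals `x ↦ λx` for some `λ ∈ F`. -/
theorem stmt_8 {F : Type*} [Field F] (hF : ringChar F ≠ 2) {k : ℕ} (hk : 3 ≤ k)
    (b p : Matrix (Fin k) (Fin k) F) (s t : ℕ)
    (h : ∀ x₁ x₂ : Matrix (Fin k) (Fin k) F,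
      ∀ y : Matrix (Fin k) (Fin k) F,
        ((x₁ * x₂ - x₂ * x₁) ^ s *
            (b * (x₁ * x₂ - x₂ * x₁) +
              (p * (x₁ * x₂ - x₂ * x₁) - (x₁ * x₂ - x₂ * x₁) * p)) *
            (x₁ * x₂ - x₂ * x₁) ^ t) * y =
          y * ((x₁ * x₂ - x₂ * x₁) ^ s *
            (b * (x₁ * x₂ - x₂ * x₁) +
              (p * (x₁ * x₂ - x₂ * x₁) - (x₁ * x₂ - x₂ * x₁) * p)) *
            (x₁ * x₂ - x₂ * x₁) ^ t)) :
    (∃ β : F, b = β • (1 : Matrix (Fin k) (Fin k) F)) ∧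
    (∃ π : F, p = π • (1 : Matrix (Fin k) (Fin k) F)) ∧
    (∃ lam : F, ∀ x : Matrix (Fin k) (Fin k) F,
      b * x + (p * x - x * p) = lam • x) := by
  have hn : 2 < Fintype.card (Fin k) := by rw [Fintype.card_fin]; omega
  obtain ⟨rfl, π, rfl⟩ := eq_zero_and_exists_eq_smul_one_of_corner_relations (b := b) (p := p)
    (Ring.two_ne_zero hF) hn fun i j hij α β hα hβ => by
      obtain ⟨l, hli, hlj⟩ := Fintype.exists_ne_and_ne_of_two_lt_card hn i j
      refine offDiagPair_corner_relations (s := s) (t := t) hij hli hlj hα hβ fun y => ?_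
      rw [offDiagPair_eq_commutator α β hij]
      exact h _ _ y
  exact ⟨⟨0, by simp⟩, ⟨π, rfl⟩, ⟨0, fun x => by simp⟩⟩
end

section
/- Let F be a field of characteristic different from 2 and let R = M_k(F) with k ≥ 2. Let H : R → R be a generalized derivation, i.e., an additive map for which there exists an additive map d : R → R satisfying d(xy) = d(x)y + x d(y) and H(xy) = H(x)y + x d(y) for all x, y ∈ R. Let s, t ≥ 0 be fixed integers and suppose that [x₁,x₂]^s H([x₁,x₂]) [x₁,x₂]^t ∈ Z(R) for all x₁, x₂ ∈ R. Then either there exists λ ∈ F such that H(x) = λx for all x ∈ R, or k = 2 (i.e., R satisfies the standard identity S₄). -/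
/-! For `k ≥ 3` the map `H` vanishes. Eliminating `d` gives `H(xy) = H(x)y + xH(y) - xH(1)y`.
The matrix `c = e_pp + β e_pq - e_qq` is the commutator `[e_pq, e_qp + β e_qq]` and squares to the
idempotent `g = e_pp + e_qq`. For a third index `a`, row and column `a` of `c` vanish, so the scalar
`c^s H(c) c^t` is `0` once `s + t > 0`, and sandwiching it between `g c^s` and `c^t g` gives
`g H(c) g = 0`; when `s = t = 0`, `H(c)` is itself central. Subtracting the value at `β = 0` isolates
`H(β e_pq)`, and `e_pq = e_pa e_aq` spreads the vanishing from the `{p, q}`-block to every entry, then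
to `H(1)` and to the diagonal matrix units. -/

open Matrix

theorem exists_ne_and_ne_of_two_lt_card {n : Type*} [Fintype n] [DecidableEq n]
    (h : 2 < Fintype.card n) (p q : n) : ∃ a, a ≠ p ∧ a ≠ q := by
  have hcard : ({p, q} : Finset n).card < (Finset.univ : Finset n).card :=
    (Finset.card_le_two).trans_lt (by simpa using h)
  obtain ⟨a, -, ha⟩ := Finset.exists_mem_notMem_of_card_lt_card hcard
  simp only [Finset.mem_insert, Finset.mem_singleton, not_or] at ha
  exact ⟨a, ha⟩

theorem apply_mul_eq_of_generalizedDerivation {R : Type*} [Ring R] {H d : R → R}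
    (hH : ∀ x y, H (x * y) = H x * y + x * d y) (x y : R) :
    H (x * y) = H x * y + x * H y - x * H 1 * y := by
  have hd : d y = H y - H 1 * y := by
    have h1 := hH 1 y
    rw [one_mul, one_mul] at h1
    rw [h1]; abel
  rw [hH, hd, mul_sub, mul_assoc]
  abel

theorem mul_mul_eq_zero_of_pow_mul_mul_pow_eq_zero_s9 {R : Type*} [Ring R] {c g X : R}
    (hc : c * c = g) (hg : IsIdempotentElem g) {s t : ℕ} (h : c ^ s * X * c ^ t = 0) :
    g * X * g = 0 := by
  have hsq : ∀ m : ℕ, c ^ m * c ^ m = g ^ m := fun m => by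
    rw [← (Commute.refl c).mul_pow, hc]
  calc g * X * g = g * (c ^ s * c ^ s) * X * ((c ^ t * c ^ t) * g) := by
        rw [hsq, hsq, ← pow_succ', ← pow_succ, hg.pow_succ_eq, hg.pow_succ_eq]
    _ = g * c ^ s * (c ^ s * X * c ^ t) * c ^ t * g := by simp only [mul_assoc]
    _ = 0 := by rw [h]; simp

namespace Matrix

variable {n R : Type*} [DecidableEq n] [Ring R]

def pairIdempotent (p q : n) : Matrix n n R := single p p 1 + single q q 1

def pairInvolution (p q : n) (β : R) : Matrix n n R :=
  single p p 1 + single p q β - single q q 1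

theorem pairInvolution_zero_add_single (p q : n) (β : R) :
    pairInvolution p q 0 + single p q β = pairInvolution p q β := by
  simp only [pairInvolution, single_zero]
  abel

variable [Fintype n]

theorem eq_zero_of_commute_of_apply_eq_zero {M : Matrix n n R}
    (hM : ∀ i j, Commute (single i j (1 : R)) M) (a : n) (ha : M a a = 0) : M = 0 := by
  ext x y
  rcases eq_or_ne x y with rfl | hxy
  · rw [diag_eq_of_commute_single (hM x a), ha, zero_apply]
  · exact row_eq_zero_of_commute_single (hM x x) hxy.symm

theorem pow_mul_mul_pow_apply_eq_zero {c : Matrix n n R} {a : n}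
    (hl : single a a 1 * c = 0) (hr : c * single a a 1 = 0) {s t : ℕ} (hst : s ≠ 0 ∨ t ≠ 0)
    (X : Matrix n n R) : (c ^ s * X * c ^ t) a a = 0 := by
  rcases hst with hs | ht
  · obtain ⟨s, rfl⟩ := Nat.exists_eq_succ_of_ne_zero hs
    calc (c ^ (s + 1) * X * c ^ t) a a
        = (single a a 1 * (c ^ (s + 1) * X * c ^ t) : Matrix n n R) a a := by
          rw [single_mul_apply_same, one_mul]
      _ = 0 := by simp only [pow_succ', ← mul_assoc, hl, zero_mul, zero_apply]
  · obtain ⟨t, rfl⟩ := Nat.exists_eq_succ_of_ne_zero ht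
    calc (c ^ s * X * c ^ (t + 1)) a a
        = (c ^ s * X * c ^ (t + 1) * single a a 1 : Matrix n n R) a a := by
          rw [mul_single_apply_same, mul_one]
      _ = 0 := by simp only [pow_succ, mul_assoc, hr, mul_zero, zero_apply]

variable {p q : n}

theorem commutator_eq_pairInvolution (hpq : p ≠ q) (β : R) :
    single p q 1 * (single q p 1 + single q q β) - (single q p 1 + single q q β) * single p q 1
      = pairInvolution p q β := by
  simp [pairInvolution, mul_add, add_mul, hpq.symm]

theorem pairInvolution_mul_self (hpq : p ≠ q) (β : R) :
    pairInvolution p q β * pairInvolution p q β = pairIdempotent p q := by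
  simp only [pairInvolution, pairIdempotent, sub_mul, mul_sub, add_mul, mul_add]
  simp only [single_mul_single_same, single_mul_single_of_ne, ne_eq, hpq, hpq.symm,
    not_false_eq_true, mul_one, one_mul, add_zero, zero_add, sub_zero]
  abel

theorem isIdempotentElem_pairIdempotent (hpq : p ≠ q) :
    IsIdempotentElem (pairIdempotent p q : Matrix n n R) := by
  simp [IsIdempotentElem, pairIdempotent, add_mul, mul_add, hpq, hpq.symm]

variable {a : n}

theorem single_mul_pairInvolution (hap : a ≠ p) (haq : a ≠ q) (β : R) :
    single a a 1 * pairInvolution p q β = 0 := by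
  simp [pairInvolution, mul_add, mul_sub, hap, haq]

theorem pairInvolution_mul_single (hap : a ≠ p) (haq : a ≠ q) (β : R) :
    pairInvolution p q β * single a a 1 = 0 := by
  simp [pairInvolution, add_mul, sub_mul, hap.symm, haq.symm]

theorem pairIdempotent_mul_mul_pairIdempotent_apply (hpq : p ≠ q) (M : Matrix n n R)
    {x y : n} (hx : x = p ∨ x = q) (hy : y = p ∨ y = q) :
    (pairIdempotent p q * M * pairIdempotent p q : Matrix n n R) x y = M x y := by
  rcases hx with rfl | rfl <;> rcases hy with rfl | rfl <;>
    simp [pairIdempotent, mul_add, add_mul, hpq, hpq.symm]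

variable (H : Matrix n n R →+ Matrix n n R)

theorem map_single_eq_of_map_mul
    (hmul : ∀ x y, H (x * y) = H x * y + x * H y - x * H 1 * y) (p a q : n) (β : R) :
    H (single p q β) = H (single p a β) * single a q 1 + single p a β * H (single a q 1)
      - single p a β * H 1 * single a q 1 := by
  rw [← hmul, single_mul_single_same, mul_one]

theorem eq_zero_of_map_single_eq_zero (hn : ∀ p q : n, ∃ a, a ≠ p ∧ a ≠ q)
    (hmul : ∀ x y, H (x * y) = H x * y + x * H y - x * H 1 * y)
    (hoff : ∀ p q : n, p ≠ q → ∀ β : R, H (single p q β) = 0) : H = 0 := by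
  have hdiag : ∀ l, H 1 l l = 0 := fun l => by
    obtain ⟨i, hil, -⟩ := hn l l
    obtain ⟨j, hji, hjl⟩ := hn i l
    have h := hmul (single i l 1) (single l j 1)
    rw [single_mul_single_same, hoff i j hji.symm, hoff i l hil, hoff l j hjl.symm,
      single_mul_mul_single] at h
    simpa using congr_fun₂ h i j
  have hdiagSingle : ∀ q (β : R), H (single q q β) = 0 := fun q β => by
    obtain ⟨l, hlq, -⟩ := hn q q
    rw [map_single_eq_of_map_mul H hmul q l q β, hoff q l hlq.symm, hoff l q hlq,
      single_mul_mul_single, hdiag]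
    simp
  ext x : 1
  rw [matrix_eq_sum_single x, map_sum, AddMonoidHom.zero_apply]
  refine Finset.sum_eq_zero fun i _ => ?_
  rw [map_sum]
  refine Finset.sum_eq_zero fun j _ => ?_
  rcases eq_or_ne i j with rfl | hij
  · exact hdiagSingle i _
  · exact hoff i j hij _

theorem map_single_eq_zero_of_commute (hn : ∀ p q : n, ∃ a, a ≠ p ∧ a ≠ q)
    (hmul : ∀ x y, H (x * y) = H x * y + x * H y - x * H 1 * y)
    (hc : ∀ p q : n, p ≠ q → ∀ (β : R) y, Commute (H (single p q β)) y)
    {p q : n} (hpq : p ≠ q) (β : R) : H (single p q β) = 0 := by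
  obtain ⟨a, hap, haq⟩ := hn p q
  refine eq_zero_of_commute_of_apply_eq_zero (fun i j => (hc p q hpq β _).symm) q ?_
  have hqa : H (single p a β) q a = 0 :=
    row_eq_zero_of_commute_single (i := q) (hc p a hap.symm β _).symm haq
  rw [map_single_eq_of_map_mul H hmul p a q β]
  simp [hqa, hpq, hpq.symm]

theorem map_single_eq_zero_of_pairIdempotent_mul_mul
    (hmul : ∀ x y, H (x * y) = H x * y + x * H y - x * H 1 * y)
    (hblock : ∀ p q : n, p ≠ q → ∀ β : R,
      pairIdempotent p q * H (single p q β) * pairIdempotent p q = 0)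
    {p q : n} (hpq : p ≠ q) (β : R) : H (single p q β) = 0 := by
  have hentry : ∀ {p q : n}, p ≠ q → ∀ (β : R) {x y : n}, (x = p ∨ x = q) → (y = p ∨ y = q) →
      H (single p q β) x y = 0 := by
    intro p q hpq β x y hx hy
    have h := pairIdempotent_mul_mul_pairIdempotent_apply hpq (H (single p q β)) hx hy
    rwa [hblock _ _ hpq β, zero_apply, eq_comm] at h
  ext x y
  by_cases hx : x = p ∨ x = q
  · by_cases hy : y = p ∨ y = q
    · exact hentry hpq β hx hy
    · rw [not_or] at hy
      have hyy : H (single y q 1) y y = 0 := hentry hy.2 1 (.inl rfl) (.inl rfl)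
      rw [map_single_eq_of_map_mul H hmul p y q β]
      rcases eq_or_ne x p with rfl | hxp
      · simp [hyy, hy.2, Ne.symm hy.2]
      · simp [hxp, Ne.symm hxp, hy.2, Ne.symm hy.2]
  · rw [not_or] at hx
    have hxx : H (single p x β) x x = 0 := hentry (Ne.symm hx.1) β (.inr rfl) (.inr rfl)
    rw [map_single_eq_of_map_mul H hmul p x q β]
    rcases eq_or_ne y q with rfl | hyq
    · simp [hxx, hx.1, Ne.symm hx.1]
    · simp [hyq, Ne.symm hyq, hx.1, Ne.symm hx.1]

theorem map_single_eq_zero_of_commute_pow_mul_mul_pow (hn : ∀ p q : n, ∃ a, a ≠ p ∧ a ≠ q)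
    (hmul : ∀ x y, H (x * y) = H x * y + x * H y - x * H 1 * y) {s t : ℕ}
    (hz : ∀ p q : n, p ≠ q → ∀ (β : R) y, Commute
      (pairInvolution p q β ^ s * H (pairInvolution p q β) * pairInvolution p q β ^ t) y)
    {p q : n} (hpq : p ≠ q) (β : R) : H (single p q β) = 0 := by
  have hsplit : ∀ (p q : n) (β : R),
      H (single p q β) = H (pairInvolution p q β) - H (pairInvolution p q 0) := fun p q β => by
    rw [← pairInvolution_zero_add_single p q β, map_add, add_sub_cancel_left]
  by_cases hst : s = 0 ∧ t = 0
  · obtain ⟨rfl, rfl⟩ := hst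
    simp only [pow_zero, one_mul, mul_one] at hz
    refine map_single_eq_zero_of_commute H hn hmul (fun p q hpq β y => ?_) hpq β
    rw [hsplit]
    exact (hz p q hpq β y).sub_left (hz p q hpq 0 y)
  · refine map_single_eq_zero_of_pairIdempotent_mul_mul H hmul (fun p q hpq β => ?_) hpq β
    obtain ⟨a, hap, haq⟩ := hn p q
    have hblock : ∀ γ : R,
        pairIdempotent p q * H (pairInvolution p q γ) * pairIdempotent p q = 0 := fun γ =>
      mul_mul_eq_zero_of_pow_mul_mul_pow_eq_zero_s9 (pairInvolution_mul_self hpq γ)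
        (isIdempotentElem_pairIdempotent hpq) <|
        eq_zero_of_commute_of_apply_eq_zero (fun i j => (hz p q hpq γ _).symm) a <|
          pow_mul_mul_pow_apply_eq_zero (single_mul_pairInvolution hap haq γ)
            (pairInvolution_mul_single hap haq γ) (not_and_or.mp hst) _
    rw [hsplit, mul_sub, sub_mul, hblock, hblock, sub_zero]

end Matrix

theorem stmt_9_general {F : Type*} [Field F] {k : ℕ} (hk : 2 ≤ k)
    (H d : Matrix (Fin k) (Fin k) F → Matrix (Fin k) (Fin k) F)
    (hHadd : ∀ x y, H (x + y) = H x + H y)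
    (hH : ∀ x y, H (x * y) = H x * y + x * d y)
    (s t : ℕ)
    (h : ∀ x₁ x₂ : Matrix (Fin k) (Fin k) F,
      ∀ y : Matrix (Fin k) (Fin k) F,
        ((x₁ * x₂ - x₂ * x₁) ^ s * H (x₁ * x₂ - x₂ * x₁) * (x₁ * x₂ - x₂ * x₁) ^ t) * y =
          y * ((x₁ * x₂ - x₂ * x₁) ^ s * H (x₁ * x₂ - x₂ * x₁) * (x₁ * x₂ - x₂ * x₁) ^ t)) :
    (∃ lam : F, ∀ x : Matrix (Fin k) (Fin k) F, H x = lam • x) ∨ k = 2 := by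
  rcases eq_or_ne k 2 with hk2 | hk2
  · exact .inr hk2
  have hn : ∀ p q : Fin k, ∃ a, a ≠ p ∧ a ≠ q :=
    exists_ne_and_ne_of_two_lt_card (by rw [Fintype.card_fin]; omega)
  let H' : Matrix (Fin k) (Fin k) F →+ Matrix (Fin k) (Fin k) F := AddMonoidHom.mk' H hHadd
  have hmul : ∀ x y, H' (x * y) = H' x * y + x * H' y - x * H' 1 * y :=
    apply_mul_eq_of_generalizedDerivation hH
  have hz : ∀ p q : Fin k, p ≠ q → ∀ (β : F) y, Commute
      (pairInvolution p q β ^ s * H' (pairInvolution p q β) * pairInvolution p q β ^ t) y := by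
    intro p q hpq β y
    have hc := h (single p q 1) (single q p 1 + single q q β) y
    rw [commutator_eq_pairInvolution hpq] at hc
    exact hc
  have hH' : H' = 0 := eq_zero_of_map_single_eq_zero H' hn hmul fun p q hpq β =>
    map_single_eq_zero_of_commute_pow_mul_mul_pow H' hn hmul hz hpq β
  exact .inl ⟨0, fun x => by rw [zero_smul]; exact DFunLike.congr_fun hH' x⟩

/-- Let `char F ≠ 2`, `R = M_k(F)` with `k ≥ 2`, and let `H` be a
generalized derivation of `R` (with associated derivation `d`).  If
`[x₁,x₂]^s H([x₁,x₂]) [x₁,x₂]^t ∈ Z(R)` for all `x₁, x₂ ∈ R`, then either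
`H(x) = λx` for some `λ ∈ F`, or `k = 2` (i.e. `R` satisfies `S₄`). -/
theorem stmt_9 {F : Type*} [Field F] (hF : ringChar F ≠ 2) {k : ℕ} (hk : 2 ≤ k)
    (H d : Matrix (Fin k) (Fin k) F → Matrix (Fin k) (Fin k) F)
    (hHadd : ∀ x y, H (x + y) = H x + H y)
    (hdadd : ∀ x y, d (x + y) = d x + d y)
    (hd : ∀ x y, d (x * y) = d x * y + x * d y)
    (hH : ∀ x y, H (x * y) = H x * y + x * d y)
    (s t : ℕ)
    (h : ∀ x₁ x₂ : Matrix (Fin k) (Fin k) F,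
      ∀ y : Matrix (Fin k) (Fin k) F,
        ((x₁ * x₂ - x₂ * x₁) ^ s * H (x₁ * x₂ - x₂ * x₁) * (x₁ * x₂ - x₂ * x₁) ^ t) * y =
          y * ((x₁ * x₂ - x₂ * x₁) ^ s * H (x₁ * x₂ - x₂ * x₁) * (x₁ * x₂ - x₂ * x₁) ^ t)) :
    (∃ lam : F, ∀ x : Matrix (Fin k) (Fin k) F, H x = lam • x) ∨ k = 2 :=
  stmt_9_general hk H d hHadd hH s t h
end

section
/- Let R = M_k(F) be the ring of all k×k matrices over a field F of characteristic different from 2, where k ≥ 3. Let b, c ∈ R and let s, t ≥ 0 be fixed integers with s + t ≠ 0. Suppose that [x₁,x₂]^s (b[x₁,x₂] + [x₁,x₂]c) [x₁,x₂]^t ∈ Z(R) for all x₁, x₂ ∈ R. Then b_{ij} = -c_{ji} and b_{ij} = c_{ji} for all i ≠ j; in particular, b and c are diagonal matrices. -/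
/-!
Diagonal commutators suffice. If `u = diagonal d`, the `(p, q)` entry of `u^s (b u + u c) u^t` is
`d p ^ s * d q ^ t * (b p q * d q + d p * c p q)`, and it vanishes for `p ≠ q` because the matrix is
central. For distinct `i, j, m` and any `μ, ν`, the commutator of `Eᵢⱼ + Eⱼₘ` and `μ Eⱼᵢ + ν Eₘⱼ`
is diagonal with entries `μ, ν - μ, -ν` at `i, j, m`. Taking `(μ, ν) = (1, 0)` gives
`c i j = b i j`, taking `(μ, ν) = (1, 2)` gives `b i j + c i j = 0`, and `2 ≠ 0` does the rest.
-/

open Matrix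

namespace Matrix

variable {n R : Type*} [Fintype n] [DecidableEq n]

theorem diagonal_pow_mul_add_mul_pow_apply [CommRing R] (d : n → R) (b c : Matrix n n R)
    (s t : ℕ) (p q : n) :
    (diagonal d ^ s * (b * diagonal d + diagonal d * c) * diagonal d ^ t) p q =
      d p ^ s * d q ^ t * (b p q * d q + d p * c p q) := by
  simp only [diagonal_pow, mul_add, add_mul, add_apply, mul_diagonal, diagonal_mul, Pi.pow_apply]
  ring

theorem single_add_single_commutator [Ring R] {i j m : n} (hij : i ≠ j) (hjm : j ≠ m)
    (μ ν : R) :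
    (single i j 1 + single j m 1) * (single j i μ + single m j ν) -
        (single j i μ + single m j ν) * (single i j 1 + single j m 1) =
      diagonal (Pi.single i μ + Pi.single j (ν - μ) - Pi.single m ν) := by
  have hdiag : diagonal (Pi.single i μ + Pi.single j (ν - μ) - Pi.single m ν) =
      single i i μ + single j j (ν - μ) - single m m ν := by
    simp only [← diagonal_single, diagonal_add, diagonal_sub]
    rfl
  rw [hdiag, sub_eq_add_neg ν, single_add, ← single_neg]
  simp only [mul_add, add_mul, single_mul_single_same, one_mul, mul_one, ne_eq, not_false_eq_true,
    single_mul_single_of_ne, hij, hij.symm, hjm, hjm.symm, add_zero, zero_add]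
  abel

end Matrix

theorem stmt_10_general {F : Type*} [Field F] (hF : ringChar F ≠ 2) {k : ℕ} (hk : 3 ≤ k)
    (b c : Matrix (Fin k) (Fin k) F) (s t : ℕ)
    (h : ∀ x₁ x₂ : Matrix (Fin k) (Fin k) F,
      ∀ y : Matrix (Fin k) (Fin k) F,
        ((x₁ * x₂ - x₂ * x₁) ^ s *
            (b * (x₁ * x₂ - x₂ * x₁) + (x₁ * x₂ - x₂ * x₁) * c) *
            (x₁ * x₂ - x₂ * x₁) ^ t) * y =
          y * ((x₁ * x₂ - x₂ * x₁) ^ s *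
            (b * (x₁ * x₂ - x₂ * x₁) + (x₁ * x₂ - x₂ * x₁) * c) *
            (x₁ * x₂ - x₂ * x₁) ^ t)) :
    (∀ i j : Fin k, i ≠ j → b i j = -c j i ∧ b i j = c j i) ∧
    b.IsDiag ∧ c.IsDiag := by
  have offDiag_eq_zero : ∀ i j : Fin k, i ≠ j → b i j = 0 ∧ c i j = 0 := by
    intro i j hij
    obtain ⟨m, hmi, hmj⟩ := Fin.exists_ne_and_ne_of_two_lt i j (by omega)
    have entry (μ ν : F) :
        let d : Fin k → F := Pi.single i μ + Pi.single j (ν - μ) - Pi.single m ν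
        d i ^ s * d j ^ t * (b i j * d j + d i * c i j) = 0 := by
      intro d
      rw [← diagonal_pow_mul_add_mul_pow_apply, ← single_add_single_commutator hij hmj.symm]
      exact row_eq_zero_of_commute_single (h _ _ (single i i 1)).symm hij.symm
    have hsub : c i j = b i j := by
      have h10 := entry 1 0
      norm_num [hij, hij.symm] at h10
      linear_combination h10
    have hadd : b i j + c i j = 0 := by
      have h12 := entry 1 2
      norm_num [hij, hij.symm, hmi.symm, hmj.symm] at h12
      exact h12
    have hb : b i j = 0 := by
      have h2b : 2 * b i j = 0 := by linear_combination hadd - hsub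
      exact (mul_eq_zero.mp h2b).resolve_left (Ring.two_ne_zero hF)
    exact ⟨hb, hsub.trans hb⟩
  refine ⟨fun i j hij => ?_, fun i j hij => (offDiag_eq_zero i j hij).1,
    fun i j hij => (offDiag_eq_zero i j hij).2⟩
  rw [(offDiag_eq_zero i j hij).1, (offDiag_eq_zero j i hij.symm).2, neg_zero]
  exact ⟨rfl, rfl⟩

/-- Let `R = M_k(F)` with `char F ≠ 2`, `k ≥ 3`, `b, c ∈ R`, and
`s, t ≥ 0` with `s + t ≠ 0`.  If `[x₁,x₂]^s (b[x₁,x₂] + [x₁,x₂]c) [x₁,x₂]^t ∈ Z(R)`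
for all `x₁, x₂ ∈ R`, then `bᵢⱼ = -cⱼᵢ` and `bᵢⱼ = cⱼᵢ` for all `i ≠ j`; in
particular `b` and `c` are diagonal. -/
theorem stmt_10 {F : Type*} [Field F] (hF : ringChar F ≠ 2) {k : ℕ} (hk : 3 ≤ k)
    (b c : Matrix (Fin k) (Fin k) F) (s t : ℕ) (hst : s + t ≠ 0)
    (h : ∀ x₁ x₂ : Matrix (Fin k) (Fin k) F,
      ∀ y : Matrix (Fin k) (Fin k) F,
        ((x₁ * x₂ - x₂ * x₁) ^ s *
            (b * (x₁ * x₂ - x₂ * x₁) + (x₁ * x₂ - x₂ * x₁) * c) *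
            (x₁ * x₂ - x₂ * x₁) ^ t) * y =
          y * ((x₁ * x₂ - x₂ * x₁) ^ s *
            (b * (x₁ * x₂ - x₂ * x₁) + (x₁ * x₂ - x₂ * x₁) * c) *
            (x₁ * x₂ - x₂ * x₁) ^ t)) :
    (∀ i j : Fin k, i ≠ j → b i j = -c j i ∧ b i j = c j i) ∧
    b.IsDiag ∧ c.IsDiag :=
  stmt_10_general hF hk b c s t h
end
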